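/- Discrete-to-continuous recursion bound: suppose nonnegative reals V_t satisfy V_{t+1} ≤ (1 - aη_t + c₀η_t²)V_t + u·η_t² with η_t = η₀/t, aη₀ > 1, and u ≥ 0. Then there exist constants C₁, C₂ (depending on a, η₀, c₀) such that V_T ≤ C₁·u/T + C₂·V_1·T^{-aη₀} for all T ≥ 2. -/

import Mathlib

/-!
Write `α = a η₀ > 1`, `c = c₀ η₀²` and `b = η₀² u`. Once `n ≥ α + k` with `k = 2c`, the factor
`1 - α/n + c/n²` lies in `[0, 1 - α/(n+k)]`, and `W s = A/s + B s^(-α)` is a supersolution of the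
shifted recursion `W (s+1) ≥ (1 - α/s) W s + E/s²` as soon as `E ≤ A (α - 1)`: the `A/s` part
gains `A(α-1)/s²`, and the `s^(-α)` part is handled by `1 - x ≤ exp(-x)`. So `V n ≤ W (n + k)` from
some `N` on. Before `N` the recursion grows at most geometrically, and `A, B` are chosen large
enough to absorb that crude bound; since `W` is decreasing, `W (n + k) ≤ W n`.
-/

lemma one_sub_div_mul_rpow_neg_le {p s : ℝ} (hp : 0 ≤ p) (hs : 0 < s) :
    (1 - p / s) * s ^ (-p) ≤ (s + 1) ^ (-p) := by
  have hexp : Real.exp (1 / s) ^ (-p) ≤ (1 + 1 / s) ^ (-p) :=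
    Real.rpow_le_rpow_of_nonpos (by positivity) (by linarith [Real.add_one_le_exp (1 / s)])
      (by linarith)
  calc (1 - p / s) * s ^ (-p) ≤ Real.exp (1 / s * -p) * s ^ (-p) := by
        gcongr
        linarith [Real.add_one_le_exp (1 / s * -p), show 1 / s * -p = -(p / s) by ring]
    _ = s ^ (-p) * Real.exp (1 / s) ^ (-p) := by rw [Real.exp_mul, mul_comm]
    _ ≤ s ^ (-p) * (1 + 1 / s) ^ (-p) := mul_le_mul_of_nonneg_left hexp (by positivity)
    _ = (s + 1) ^ (-p) := by
        rw [← Real.mul_rpow hs.le (by positivity), mul_one_add, mul_one_div_cancel hs.ne']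

lemma one_sub_div_mul_div_add_div_sq_le {α A E s : ℝ} (hA : 0 ≤ A) (hE : E ≤ A * (α - 1))
    (hs : 0 < s) : (1 - α / s) * (A / s) + E / s ^ 2 ≤ A / (s + 1) := by
  have key : A / (s + 1) - ((1 - α / s) * (A / s) + E / s ^ 2) =
      (A * ((α - 1) * s + α) - E * (s + 1)) / (s ^ 2 * (s + 1)) := by
    field_simp
    ring
  have : 0 ≤ A * ((α - 1) * s + α) - E * (s + 1) := by nlinarith
  linarith [div_nonneg this (by positivity : (0:ℝ) ≤ s ^ 2 * (s + 1))]

lemma div_add_mul_rpow_neg_le_of_le {A B α s t : ℝ} (hA : 0 ≤ A) (hB : 0 ≤ B) (hα : 0 ≤ α)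
    (hs : 0 < s) (hst : s ≤ t) : A / t + B * t ^ (-α) ≤ A / s + B * s ^ (-α) := by
  have := Real.rpow_le_rpow_of_nonpos hs hst (neg_nonpos.2 hα)
  gcongr

lemma one_sub_div_add_div_sq_le {α c k s : ℝ} (hc : 0 ≤ c) (hk : 0 ≤ k) (hck : 2 * c ≤ α * k)
    (hks : k ≤ s) (hs : 0 < s) : 1 - α / s + c / s ^ 2 ≤ 1 - α / (s + k) := by
  have key : (1 - α / (s + k)) - (1 - α / s + c / s ^ 2) =
      (α * k * s - c * (s + k)) / (s ^ 2 * (s + k)) := by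
    field_simp
    ring
  have : 0 ≤ α * k * s - c * (s + k) := by nlinarith
  linarith [div_nonneg this (by positivity : (0:ℝ) ≤ s ^ 2 * (s + k))]

lemma one_sub_div_add_div_sq_nonneg {α c s : ℝ} (hc : 0 ≤ c) (hα : 0 < α) (hs : α ≤ s) :
    0 ≤ 1 - α / s + c / s ^ 2 := by
  have : α / s ≤ 1 := (div_le_one (by linarith)).2 hs
  have : 0 ≤ c / s ^ 2 := by positivity
  linarith

lemma div_sq_le_one_add_sq_mul_div_add_sq {b k s : ℝ} (hb : 0 ≤ b) (hk : 0 ≤ k) (hs : 1 ≤ s) :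
    b / s ^ 2 ≤ (1 + k) ^ 2 * b / (s + k) ^ 2 := by
  rw [div_le_div_iff₀ (by positivity) (by positivity)]
  have : (s + k) ^ 2 ≤ ((1 + k) * s) ^ 2 := by gcongr; nlinarith
  nlinarith

lemma one_sub_div_mul_add_div_sq_le {α A B E s : ℝ} (hα : 0 ≤ α) (hA : 0 ≤ A) (hB : 0 ≤ B)
    (hE : E ≤ A * (α - 1)) (hs : 0 < s) :
    (1 - α / s) * (A / s + B * s ^ (-α)) + E / s ^ 2 ≤ A / (s + 1) + B * (s + 1) ^ (-α) := by
  have hdecay := mul_le_mul_of_nonneg_left (one_sub_div_mul_rpow_neg_le hα hs) hB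
  linarith [one_sub_div_mul_div_add_div_sq_le hA hE hs]

lemma one_sub_div_add_div_sq_mul_add_div_sq_le {α c k b A B s : ℝ} (hα : 0 ≤ α) (hc : 0 ≤ c)
    (hk : 0 ≤ k) (hck : 2 * c ≤ α * k) (hb : 0 ≤ b) (hA : 0 ≤ A) (hB : 0 ≤ B)
    (hE : (1 + k) ^ 2 * b ≤ A * (α - 1)) (hks : k ≤ s) (hs : 1 ≤ s) :
    (1 - α / s + c / s ^ 2) * (A / (s + k) + B * (s + k) ^ (-α)) + b / s ^ 2 ≤
      A / (s + k + 1) + B * (s + k + 1) ^ (-α) :=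
  calc (1 - α / s + c / s ^ 2) * (A / (s + k) + B * (s + k) ^ (-α)) + b / s ^ 2
      ≤ (1 - α / (s + k)) * (A / (s + k) + B * (s + k) ^ (-α)) + (1 + k) ^ 2 * b / (s + k) ^ 2 :=
        add_le_add
          (mul_le_mul_of_nonneg_right (one_sub_div_add_div_sq_le hc hk hck hks (by linarith))
            (by positivity))
          (div_sq_le_one_add_sq_mul_div_add_sq hb hk hs)
    _ ≤ A / (s + k + 1) + B * (s + k + 1) ^ (-α) :=
        one_sub_div_mul_add_div_sq_le hα hA hB hE (by linarith)

lemma le_of_le_mul_add_of_mul_add_le {V W q b : ℕ → ℝ} {N : ℕ} (hq : ∀ n, N ≤ n → 0 ≤ q n)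
    (hV : ∀ n, N ≤ n → V (n + 1) ≤ q n * V n + b n)
    (hW : ∀ n, N ≤ n → q n * W n + b n ≤ W (n + 1)) (hN : V N ≤ W N) :
    ∀ n, N ≤ n → V n ≤ W n := by
  intro n hn
  induction n, hn using Nat.le_induction with
  | base => exact hN
  | succ n hn ih =>
    calc V (n + 1) ≤ q n * V n + b n := hV n hn
      _ ≤ q n * W n + b n := by have := hq n hn; gcongr
      _ ≤ W (n + 1) := hW n hn

lemma le_pow_mul_of_le_mul_add {V : ℕ → ℝ} {r b : ℝ} (hr : 0 ≤ r) (hb : 0 ≤ b) (hV₁ : 0 ≤ V 1)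
    (hV : ∀ n, 1 ≤ n → V (n + 1) ≤ r * V n + b) :
    ∀ n, 1 ≤ n → V n ≤ (r + 1) ^ n * (V 1 + b) := by
  intro n hn
  induction n, hn using Nat.le_induction with
  | base => nlinarith
  | succ n hn ih =>
    have hpow : 1 ≤ (r + 1) ^ n := one_le_pow₀ (by linarith)
    calc V (n + 1) ≤ r * V n + b := hV n hn
      _ ≤ r * ((r + 1) ^ n * (V 1 + b)) + (r + 1) ^ n * (V 1 + b) := by gcongr; nlinarith
      _ = (r + 1) ^ (n + 1) * (V 1 + b) := by ring

lemma le_two_add_pow_mul_of_le_one_sub_div {α c b : ℝ} {V : ℕ → ℝ} (hα : 0 ≤ α) (hc : 0 ≤ c)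
    (hb : 0 ≤ b) (hV : ∀ t, 0 ≤ V t)
    (hrec : ∀ t : ℕ, 1 ≤ t → V (t + 1) ≤ (1 - α / t + c / t ^ 2) * V t + b / t ^ 2)
    {N t : ℕ} (ht : 1 ≤ t) (htN : t ≤ N) : V t ≤ (2 + c) ^ N * (V 1 + b) := by
  have hstep : ∀ n, 1 ≤ n → V (n + 1) ≤ (1 + c) * V n + b := by
    intro n hn
    have hn' : (1 : ℝ) ≤ n := by exact_mod_cast hn
    have hq : 1 - α / n + c / n ^ 2 ≤ 1 + c := by
      have : c / n ^ 2 ≤ c := div_le_self hc (one_le_pow₀ hn')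
      have : 0 ≤ α / n := by positivity
      linarith
    have hbn : b / n ^ 2 ≤ b := div_le_self hb (one_le_pow₀ hn')
    nlinarith [hrec n hn, mul_le_mul_of_nonneg_right hq (hV n)]
  calc V t ≤ (1 + c + 1) ^ t * (V 1 + b) :=
        le_pow_mul_of_le_mul_add (by positivity) hb (hV 1) hstep t ht
    _ ≤ (2 + c) ^ N * (V 1 + b) := by
        rw [show 1 + c + 1 = 2 + c by ring]
        exact mul_le_mul_of_nonneg_right (pow_le_pow_right₀ (by linarith) htN)
          (by linarith [hV 1])

lemma le_div_add_mul_rpow_neg_of_le_one_sub_div {α c k b A B : ℝ} {V : ℕ → ℝ} {N : ℕ}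
    (hα : 1 ≤ α) (hc : 0 ≤ c) (hk : 0 ≤ k) (hck : 2 * c ≤ α * k) (hb : 0 ≤ b) (hA : 0 ≤ A)
    (hB : 0 ≤ B) (hE : (1 + k) ^ 2 * b ≤ A * (α - 1)) (hN : α + k ≤ N)
    (hrec : ∀ t : ℕ, 1 ≤ t → V (t + 1) ≤ (1 - α / t + c / t ^ 2) * V t + b / t ^ 2)
    (hstart : V N ≤ A / (N + k) + B * (N + k) ^ (-α)) :
    ∀ t, N ≤ t → V t ≤ A / (t + k) + B * (t + k) ^ (-α) := by
  have hlarge : ∀ n : ℕ, N ≤ n → α + k ≤ n := fun n hn => hN.trans (by exact_mod_cast hn)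
  refine le_of_le_mul_add_of_mul_add_le (W := fun n : ℕ => A / (n + k) + B * (n + k) ^ (-α))
    (fun n hn => ?_) (fun n hn => hrec n ?_) (fun n hn => ?_) hstart
  · exact one_sub_div_add_div_sq_nonneg hc (by linarith) (by linarith [hlarge n hn])
  · exact_mod_cast (show (1 : ℝ) ≤ n by linarith [hlarge n hn])
  · rw [Nat.cast_succ, add_right_comm]
    exact one_sub_div_add_div_sq_mul_add_div_sq_le (by linarith) hc hk hck hb hA hB hE
      (by linarith [hlarge n hn]) (by linarith [hlarge n hn])

theorem exists_le_div_add_rpow_neg_of_le_one_sub_div {α c : ℝ} (hα : 1 < α) (hc : 0 ≤ c) :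
    ∃ C₁ C₂ : ℝ, ∀ (b : ℝ) (V : ℕ → ℝ), 0 ≤ b → (∀ t, 0 ≤ V t) →
      (∀ t : ℕ, 1 ≤ t → V (t + 1) ≤ (1 - α / t + c / t ^ 2) * V t + b / t ^ 2) →
      ∀ T : ℕ, 1 ≤ T → V T ≤ C₁ * b / T + C₂ * V 1 * (T : ℝ) ^ (-α) := by
  set k := 2 * c
  have hk : 0 ≤ k := by positivity
  have hck : 2 * c ≤ α * k := by nlinarith
  have hα₁ : 0 < α - 1 := sub_pos.2 hα
  obtain ⟨N, hN⟩ := exists_nat_ge (α + k)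
  have hN₁ : 1 ≤ N := by exact_mod_cast (show (1 : ℝ) ≤ N by linarith)
  have hNk : (0 : ℝ) < N + k := by positivity
  set D := (2 + c) ^ N
  refine ⟨(1 + k) ^ 2 / (α - 1) + D * (N + k), D * (N + k) ^ α, ?_⟩
  intro b V hb hV hrec T hT
  set A := ((1 + k) ^ 2 / (α - 1) + D * (N + k)) * b with hA_def
  set B := D * (N + k) ^ α * V 1 with hB_def
  have hA : 0 ≤ A := by positivity
  have hB : 0 ≤ B := by have := hV 1; positivity
  have hprefix : ∀ t, 1 ≤ t → t ≤ N → V t ≤ D * (V 1 + b) := fun t ht htN =>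
    le_two_add_pow_mul_of_le_one_sub_div (by linarith) hc hb hV hrec ht htN
  have hstart : D * (V 1 + b) ≤ A / (N + k) + B * (N + k) ^ (-α) := by
    have hA' : A / (N + k) = (1 + k) ^ 2 / (α - 1) * b / (N + k) + D * b := by
      rw [hA_def]
      field_simp
    have hB' : B * (N + k) ^ (-α) = D * V 1 := by
      rw [hB_def, Real.rpow_neg hNk.le]
      field_simp
    have : 0 ≤ (1 + k) ^ 2 / (α - 1) * b / (N + k) := by positivity
    linarith
  have hE : (1 + k) ^ 2 * b ≤ A * (α - 1) := by
    have : A * (α - 1) = (1 + k) ^ 2 * b + D * (N + k) * b * (α - 1) := by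
      rw [hA_def]
      field_simp
    nlinarith [show 0 ≤ D * (N + k) * b * (α - 1) by positivity]
  have htail : ∀ t, N ≤ t → V t ≤ A / (t + k) + B * (t + k) ^ (-α) :=
    le_div_add_mul_rpow_neg_of_le_one_sub_div hα.le hc hk hck hb hA hB hE hN hrec
      ((hprefix N hN₁ le_rfl).trans hstart)
  have hT₀ : (0 : ℝ) < T := by exact_mod_cast hT
  have hdecr : ∀ s : ℝ, T ≤ s → A / s + B * s ^ (-α) ≤ A / T + B * (T : ℝ) ^ (-α) :=
    fun s hs => div_add_mul_rpow_neg_le_of_le hA hB (by linarith) hT₀ hs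
  show V T ≤ A / T + B * (T : ℝ) ^ (-α)
  rcases le_or_gt N T with hNT | hTN
  · exact (htail T hNT).trans (hdecr _ (by linarith))
  · have : (T : ℝ) ≤ N := by exact_mod_cast hTN.le
    exact (hprefix T hT hTN.le).trans (hstart.trans (hdecr _ (by linarith)))

theorem stmt_18_general (a η₀ c₀ : ℝ) (haη : 1 < a * η₀) (hc : 0 ≤ c₀) :
    ∃ C₁ C₂ : ℝ, ∀ (u : ℝ) (V : ℕ → ℝ), 0 ≤ u → (∀ t, 0 ≤ V t) →
      (∀ t : ℕ, 1 ≤ t →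
        V (t + 1) ≤ (1 - a * (η₀ / t) + c₀ * (η₀ / t) ^ 2) * V t + u * (η₀ / t) ^ 2) →
      ∀ T : ℕ, 2 ≤ T →
        V T ≤ C₁ * u / T + C₂ * V 1 * (T : ℝ) ^ (-(a * η₀)) := by
  obtain ⟨C₁, C₂, hC⟩ :=
    exists_le_div_add_rpow_neg_of_le_one_sub_div haη (mul_nonneg hc (sq_nonneg η₀))
  refine ⟨C₁ * η₀ ^ 2, C₂, fun u V hu hV hrec T hT => ?_⟩
  rw [mul_assoc C₁]
  refine hC (η₀ ^ 2 * u) V (by positivity) hV (fun t ht => ?_) T (by omega)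
  convert hrec t ht using 1
  ring

/-- discrete recursion bound.  If nonnegative reals `V t` satisfy
`V (t+1) ≤ (1 - a η_t + c₀ η_t²) V t + u η_t²` with `η_t = η₀/t` and `a η₀ > 1`, then
there are constants `C₁, C₂` (depending only on `a, η₀, c₀`) with
`V T ≤ C₁ u / T + C₂ V 1 T^{-a η₀}` for all `T ≥ 2`. -/
theorem stmt_18 (a η₀ c₀ : ℝ) (ha : 0 < a) (haη : 1 < a * η₀) (hc : 0 ≤ c₀) :
    ∃ C₁ C₂ : ℝ, ∀ (u : ℝ) (V : ℕ → ℝ), 0 ≤ u → (∀ t, 0 ≤ V t) →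
      (∀ t : ℕ, 1 ≤ t →
        V (t + 1) ≤ (1 - a * (η₀ / t) + c₀ * (η₀ / t) ^ 2) * V t + u * (η₀ / t) ^ 2) →
      ∀ T : ℕ, 2 ≤ T →
        V T ≤ C₁ * u / T + C₂ * V 1 * (T : ℝ) ^ (-(a * η₀)) :=
  stmt_18_general a η₀ c₀ haη hc
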